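/- Let w ∈ ℕ, let π : ℤ → ℤ be a bijection with |π(i) − i| ≤ w for all i, and let P be its permutation operator on ℓ²(ℤ). Then for every k ∈ ℤ the operator B_k := Q_k P Q_k + (I − Q_k) is Fredholm, and its index is independent of k: ind(B_k) = ind(B_1) for all k ∈ ℤ. -/

import Mathlib

/-!
On coordinates `< k` the compression `B_k` is the identity, and on coordinates `≥ k` it is `P`
with every entry that `π` sends below `k` deleted. Hence its kernel consists of the vectors
supported on `π({i < k ≤ π i})` and its range of the vectors vanishing on `{π i < k ≤ i}`; the
band condition makes both sets finite, so `B_k` is Fredholm of index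
`#{i < k ≤ π i} - #{π i < k ≤ i} = ∑ᵢ ([k ≤ π i] - [k ≤ i])`, the net number of indices that
`π` carries across the cut at `k`. Moving the cut from `k` to `k + 1` changes the summands only by
`[i = k] - [π i = k]`, which sums to zero.
-/

noncomputable section

/-- `ℓ²(ℤ)`, the Hilbert space of square-summable complex sequences indexed by `ℤ`. -/
abbrev H : Type := lp (fun _ : ℤ => ℂ) 2

/-- A bounded operator on a Hilbert space is Fredholm if its kernel is finite-dimensional
and its range is closed and of finite codimension. -/
def IsFredholm (T : H →L[ℂ] H) : Prop :=
  FiniteDimensional ℂ (LinearMap.ker (T : H →ₗ[ℂ] H)) ∧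
  IsClosed (LinearMap.range (T : H →ₗ[ℂ] H) : Set H) ∧
  FiniteDimensional ℂ (H ⧸ LinearMap.range (T : H →ₗ[ℂ] H))

/-- The Fredholm index `ind(T) = dim ker T − dim coker T`. -/
def fredholmIndex (T : H →L[ℂ] H) : ℤ :=
  (Module.finrank ℂ (LinearMap.ker (T : H →ₗ[ℂ] H)) : ℤ) -
  (Module.finrank ℂ (H ⧸ LinearMap.range (T : H →ₗ[ℂ] H)) : ℤ)

open scoped ENNReal

open Finset

theorem Memℓp.comp_equiv {α β E : Type*} [NormedAddCommGroup E] {p : ℝ≥0∞} (hp : 0 < p.toReal)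
    {f : α → E} (hf : Memℓp f p) (σ : β ≃ α) : Memℓp (f ∘ σ) p :=
  (memℓp_gen_iff hp).2 (σ.summable_iff.2 ((memℓp_gen_iff hp).1 hf))

def vanishingOn (s : Set ℤ) : Submodule ℂ H where
  carrier := {x | ∀ i ∈ s, x i = 0}
  add_mem' hx hy i hi := by simp [hx i hi, hy i hi]
  zero_mem' _ _ := rfl
  smul_mem' c x hx i hi := by simp [hx i hi]

theorem mem_vanishingOn {s : Set ℤ} {x : H} : x ∈ vanishingOn s ↔ ∀ i ∈ s, x i = 0 := Iff.rfl

theorem isClosed_vanishingOn (s : Set ℤ) : IsClosed (vanishingOn s : Set H) := by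
  have : (vanishingOn s : Set H) = ⋂ i ∈ s, lp.evalCLM ℂ (fun _ : ℤ => ℂ) 2 i ⁻¹' {0} := by
    ext x
    simp [mem_vanishingOn, lp.evalCLM]
  rw [this]
  exact isClosed_biInter fun i _ => isClosed_singleton.preimage (ContinuousLinearMap.continuous _)

def restrictTo (s : Finset ℤ) : H →ₗ[ℂ] (s → ℂ) :=
  LinearMap.pi fun a => lp.evalₗ (fun _ : ℤ => ℂ) 2 (a : ℤ)

@[simp] theorem restrictTo_apply (s : Finset ℤ) (x : H) (a : s) : restrictTo s x a = x a := rfl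

theorem ker_restrictTo (s : Finset ℤ) : LinearMap.ker (restrictTo s) = vanishingOn s := by
  ext x
  simp [funext_iff, mem_vanishingOn]

def extendByZero (s : Finset ℤ) (f : s → ℂ) : H :=
  ⟨fun j => if h : j ∈ s then f ⟨j, h⟩ else 0,
    (memℓp_zero (s.finite_toSet.subset fun j hj => by
      by_contra h
      exact hj (dif_neg h))).of_exponent_ge zero_le⟩

theorem extendByZero_apply_of_mem {s : Finset ℤ} (f : s → ℂ) {j : ℤ} (hj : j ∈ s) :
    extendByZero s f j = f ⟨j, hj⟩ := dif_pos hj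

theorem extendByZero_mem_vanishingOn_compl (s : Finset ℤ) (f : s → ℂ) :
    extendByZero s f ∈ vanishingOn (↑s)ᶜ := fun _ hj => dif_neg hj

theorem restrictTo_extendByZero (s : Finset ℤ) (f : s → ℂ) : restrictTo s (extendByZero s f) = f :=
  funext fun a => extendByZero_apply_of_mem f a.2

def quotVanishingOnEquiv (s : Finset ℤ) : (H ⧸ vanishingOn s) ≃ₗ[ℂ] (s → ℂ) :=
  (Submodule.quotEquivOfEq _ _ (ker_restrictTo s).symm).trans
    ((restrictTo s).quotKerEquivOfSurjective fun f => ⟨_, restrictTo_extendByZero s f⟩)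

def vanishingOnComplEquiv (s : Finset ℤ) : vanishingOn (↑s)ᶜ ≃ₗ[ℂ] (s → ℂ) :=
  LinearEquiv.ofBijective ((restrictTo s).domRestrict _) ⟨fun x y hxy => by
      ext j
      by_cases hj : j ∈ s
      · exact congrFun hxy ⟨j, hj⟩
      · rw [x.2 j hj, y.2 j hj],
    fun f => ⟨⟨_, extendByZero_mem_vanishingOn_compl s f⟩, restrictTo_extendByZero s f⟩⟩

theorem isFredholm_and_index_of_ker_range {T : H →L[ℂ] H} {s t : Finset ℤ}
    (hker : LinearMap.ker (T : H →ₗ[ℂ] H) = vanishingOn (↑s)ᶜ)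
    (hrange : LinearMap.range (T : H →ₗ[ℂ] H) = vanishingOn t) :
    IsFredholm T ∧ fredholmIndex T = (#s : ℤ) - #t := by
  let eker : LinearMap.ker (T : H →ₗ[ℂ] H) ≃ₗ[ℂ] (s → ℂ) :=
    (LinearEquiv.ofEq _ _ hker).trans (vanishingOnComplEquiv s)
  let ecoker : (H ⧸ LinearMap.range (T : H →ₗ[ℂ] H)) ≃ₗ[ℂ] (t → ℂ) :=
    (Submodule.quotEquivOfEq _ _ hrange).trans (quotVanishingOnEquiv t)
  refine ⟨⟨eker.symm.finiteDimensional, hrange ▸ isClosed_vanishingOn _,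
    ecoker.symm.finiteDimensional⟩, ?_⟩
  simp [fredholmIndex, eker.finrank_eq, ecoker.finrank_eq]

section Compression

variable {π : ℤ ≃ ℤ} {k : ℤ} {B : H →L[ℂ] H}

theorem ker_eq_vanishingOn
    (hB : ∀ (x : H) (i : ℤ), B x i = if k ≤ i then (if k ≤ π i then x (π i) else 0) else x i) :
    LinearMap.ker (B : H →ₗ[ℂ] H) = vanishingOn {j | k ≤ j ∧ π.symm j < k}ᶜ := by
  ext x
  simp only [LinearMap.mem_ker, mem_vanishingOn, Set.mem_compl_iff, Set.mem_ofPred_eq, not_and,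
    not_lt, ContinuousLinearMap.coe_coe]
  constructor
  · intro h j hj
    have hBx (i : ℤ) : B x i = 0 := by rw [h]; rfl
    by_cases hk : k ≤ j
    · simpa [hB, hj hk, hk] using hBx (π.symm j)
    · simpa [hB, hk] using hBx j
  · intro h
    ext i
    rw [hB]
    split_ifs with hi hπi
    · exact h _ fun _ => by simpa using hi
    · rfl
    · exact h i fun hi' => absurd hi' hi

theorem range_eq_vanishingOn
    (hB : ∀ (x : H) (i : ℤ), B x i = if k ≤ i then (if k ≤ π i then x (π i) else 0) else x i) :
    LinearMap.range (B : H →ₗ[ℂ] H) = vanishingOn {i | k ≤ i ∧ π i < k} := by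
  ext y
  constructor
  · rintro ⟨x, rfl⟩ i ⟨hi, hπi⟩
    simp [hB, hi, hπi.not_ge]
  · intro hy
    let x : ℤ → ℂ := fun j => if k ≤ j then (if k ≤ π.symm j then y (π.symm j) else 0) else y j
    have hx : Memℓp x 2 := by
      refine ((((lp.memℓp y).comp_equiv (by norm_num) π.symm).norm).add (lp.memℓp y).norm).mono
        fun j => ?_
      dsimp only [x, Pi.add_apply, Function.comp_apply]
      split_ifs <;> simp [add_nonneg]
    refine ⟨⟨x, hx⟩, ?_⟩
    ext i
    simp only [ContinuousLinearMap.coe_coe, hB]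
    by_cases hi : k ≤ i
    · by_cases hπi : k ≤ π i
      · simp [x, hi, hπi]
      · simp [hi, hπi, hy i ⟨hi, not_le.1 hπi⟩]
    · simp [x, hi]

end Compression

section Crossings

variable {w : ℕ} {π : ℤ ≃ ℤ}

def netCrossing (π : ℤ ≃ ℤ) (k i : ℤ) : ℤ :=
  (if k ≤ π i then 1 else 0) - (if k ≤ i then 1 else 0)

def upCrossings (w : ℕ) (π : ℤ ≃ ℤ) (k : ℤ) : Finset ℤ :=
  (Ico (k - w) (k + w)).filter fun i => i < k ∧ k ≤ π i

def downCrossings (w : ℕ) (π : ℤ ≃ ℤ) (k : ℤ) : Finset ℤ :=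
  (Ico (k - w) (k + w)).filter fun i => k ≤ i ∧ π i < k

theorem mem_upCrossings (hband : ∀ i, |π i - i| ≤ (w : ℤ)) {k i : ℤ} :
    i ∈ upCrossings w π k ↔ i < k ∧ k ≤ π i := by
  have := abs_le.1 (hband i)
  simp only [upCrossings, mem_filter, mem_Ico]
  omega

theorem mem_downCrossings (hband : ∀ i, |π i - i| ≤ (w : ℤ)) {k i : ℤ} :
    i ∈ downCrossings w π k ↔ k ≤ i ∧ π i < k := by
  have := abs_le.1 (hband i)
  simp only [downCrossings, mem_filter, mem_Ico]
  omega

def cutFlux (w : ℕ) (π : ℤ ≃ ℤ) (k : ℤ) : ℤ :=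
  ∑ i ∈ Ico (k - w) (k + w), netCrossing π k i

theorem card_upCrossings_sub_card_downCrossings (w : ℕ) (π : ℤ ≃ ℤ) (k : ℤ) :
    (#(upCrossings w π k) : ℤ) - #(downCrossings w π k) = cutFlux w π k := by
  have h (i : ℤ) : netCrossing π k i =
      (if i < k ∧ k ≤ π i then 1 else 0) - (if k ≤ i ∧ π i < k then 1 else 0) := by
    unfold netCrossing
    split_ifs <;> omega
  simp only [cutFlux, h, sum_sub_distrib, sum_boole, upCrossings, downCrossings]

theorem sum_netCrossing_of_subset (hband : ∀ i, |π i - i| ≤ (w : ℤ)) {k : ℤ} {s : Finset ℤ}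
    (hs : Ico (k - w) (k + w) ⊆ s) : ∑ i ∈ s, netCrossing π k i = cutFlux w π k := by
  refine (sum_subset hs fun i _ hi => ?_).symm
  have := abs_le.1 (hband i)
  simp only [mem_Ico] at hi
  unfold netCrossing
  split_ifs <;> omega

theorem cutFlux_periodic (hband : ∀ i, |π i - i| ≤ (w : ℤ)) :
    Function.Periodic (cutFlux w π) 1 := by
  intro k
  set s := Ico (k - w) (k + 1 + w)
  rw [← sum_netCrossing_of_subset hband (s := s) (Ico_subset_Ico (by omega) (by omega)),
    ← sum_netCrossing_of_subset hband (s := s) (Ico_subset_Ico (by omega) (by omega)),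
    ← sub_eq_zero, ← sum_sub_distrib]
  have h (i : ℤ) : netCrossing π (k + 1) i - netCrossing π k i =
      (if i = k then 1 else 0) - (if i = π.symm k then 1 else 0) := by
    simp only [Equiv.eq_symm_apply]
    unfold netCrossing
    split_ifs <;> omega
  have hk : π.symm k ∈ s := by
    have := abs_le.1 (hband (π.symm k))
    simp only [Equiv.apply_symm_apply] at this
    simp only [s, mem_Ico]
    omega
  simp only [h, sum_sub_distrib, sum_ite_eq', hk, if_true, s, mem_Ico]
  split_ifs <;> omega

theorem cutFlux_eq (hband : ∀ i, |π i - i| ≤ (w : ℤ)) (k l : ℤ) :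
    cutFlux w π k = cutFlux w π l := by
  have hper := cutFlux_periodic hband
  simpa using (hper.int_mul_eq k).trans (hper.int_mul_eq l).symm

end Crossings

theorem compression_isFredholm_and_index {w : ℕ} {π : ℤ ≃ ℤ} {k : ℤ} {B : H →L[ℂ] H}
    (hband : ∀ i, |π i - i| ≤ (w : ℤ))
    (hB : ∀ (x : H) (i : ℤ), B x i = if k ≤ i then (if k ≤ π i then x (π i) else 0) else x i) :
    IsFredholm B ∧ fredholmIndex B = cutFlux w π k := by
  have hker : {j | k ≤ j ∧ π.symm j < k} = ↑((upCrossings w π k).map π.toEmbedding) := by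
    ext j
    simp [mem_upCrossings hband, and_comm]
  have hrange : {i | k ≤ i ∧ π i < k} = ↑(downCrossings w π k) := by
    ext i
    simp [mem_downCrossings hband]
  obtain ⟨hB_fredholm, hB_index⟩ := isFredholm_and_index_of_ker_range
    (by rw [ker_eq_vanishingOn hB, hker]) (by rw [range_eq_vanishingOn hB, hrange])
  refine ⟨hB_fredholm, ?_⟩
  rw [hB_index, card_map, card_upCrossings_sub_card_downCrossings]

theorem compression_apply {π : ℤ ≃ ℤ} {P : H →L[ℂ] H} {Q : ℤ → (H →L[ℂ] H)}
    (hP : ∀ (x : H) (i : ℤ), P x i = x (π i))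
    (hQ : ∀ (k : ℤ) (x : H) (i : ℤ), Q k x i = if k ≤ i then x i else 0) (k : ℤ) (x : H) (i : ℤ) :
    (Q k ∘L P ∘L Q k + (1 - Q k)) x i =
      if k ≤ i then (if k ≤ π i then x (π i) else 0) else x i := by
  simp only [add_apply, sub_apply, ContinuousLinearMap.comp_apply, one_apply_eq_self,
    lp.coeFn_add, lp.coeFn_sub, Pi.add_apply, Pi.sub_apply, hQ, hP]
  split_ifs <;> simp

/-- **Lemma 1.** For a banded permutation operator `P` on `ℓ²(ℤ)`, each
compression `B_k = Q_k P Q_k + (I − Q_k)` is Fredholm, with index independent of `k`. -/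
theorem index_independent_of_cut (w : ℕ) (π : ℤ ≃ ℤ)
    (hband : ∀ i : ℤ, |π i - i| ≤ (w : ℤ))
    (P : H →L[ℂ] H) (Q : ℤ → (H →L[ℂ] H))
    (hP : ∀ (x : H) (i : ℤ), P x i = x (π i))
    (hQ : ∀ (k : ℤ) (x : H) (i : ℤ), Q k x i = if k ≤ i then x i else 0) :
    ∀ k : ℤ,
      IsFredholm (Q k ∘L P ∘L Q k + (1 - Q k)) ∧
      fredholmIndex (Q k ∘L P ∘L Q k + (1 - Q k)) =
        fredholmIndex (Q 1 ∘L P ∘L Q 1 + (1 - Q 1)) := by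
  intro k
  obtain ⟨hk_fredholm, hk_index⟩ :=
    compression_isFredholm_and_index hband (compression_apply hP hQ k)
  obtain ⟨-, h1_index⟩ := compression_isFredholm_and_index hband (compression_apply hP hQ 1)
  exact ⟨hk_fredholm, by rw [hk_index, h1_index, cutFlux_eq hband]⟩
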